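/- For a single variable: if 0 < a ≤ b and β ∈ ℝ, then inf{ (1/2)(β²/λ + λ) : λ ∈ [a,b] } = |β| + (1/(2a)) (a − |β|)₊² + (1/(2b)) (|β| − b)₊², where t₊ = max(t,0). -/

import Mathlib

/-!
The map `f l = (β² / l + l) / 2` is minimised over `[a, b]` at the point `c` of `[a, b]`
nearest to `|β|`: `f l - f c = (l - c)(l c - β²) / (2 l c)`, and for that `c` the two factors
of the numerator have the same sign on `[a, b]`. The value `f c` is read off from
`f l = |β| + (l - |β|)² / (2 l)`.
-/

open Set

theorem IsMinOn.csInf_image_eq {α β : Type*} [ConditionallyCompleteLinearOrder β]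
    {f : α → β} {s : Set α} {c : α} (hf : IsMinOn f s c) (hc : c ∈ s) :
    sInf (f '' s) = f c :=
  IsLeast.csInf_eq ⟨mem_image_of_mem f hc, forall_mem_image.2 hf⟩

noncomputable def boxPenalty (β l : ℝ) : ℝ := (1 / 2) * (β ^ 2 / l + l)

lemma boxPenalty_eq_abs_add (β : ℝ) {l : ℝ} (hl : l ≠ 0) :
    boxPenalty β l = |β| + (l - |β|) ^ 2 / (2 * l) := by
  rw [boxPenalty, ← sq_abs β]
  field_simp
  ring

lemma boxPenalty_sub_boxPenalty (β : ℝ) {c l : ℝ} (hc : c ≠ 0) (hl : l ≠ 0) :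
    boxPenalty β l - boxPenalty β c = (l - c) * (l * c - β ^ 2) / (2 * l * c) := by
  rw [boxPenalty, boxPenalty]
  field_simp
  ring

lemma boxPenalty_le_of_nonneg {β c l : ℝ} (hc : 0 < c) (hl : 0 < l)
    (h : 0 ≤ (l - c) * (l * c - β ^ 2)) : boxPenalty β c ≤ boxPenalty β l := by
  have hdiff := boxPenalty_sub_boxPenalty β hc.ne' hl.ne'
  have : 0 ≤ (l - c) * (l * c - β ^ 2) / (2 * l * c) := by positivity
  linarith

section Minimizer

variable {a b β : ℝ}

lemma isMinOn_boxPenalty_of_nonneg {c : ℝ} (ha : 0 < a) (hc : c ∈ Icc a b)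
    (h : ∀ l ∈ Icc a b, 0 ≤ (l - c) * (l * c - β ^ 2)) :
    IsMinOn (boxPenalty β) (Icc a b) c :=
  fun l hl => boxPenalty_le_of_nonneg (ha.trans_le hc.1) (ha.trans_le hl.1) (h l hl)

lemma isMinOn_boxPenalty_left (ha : 0 < a) (hab : a ≤ b) (hβ : |β| ≤ a) :
    IsMinOn (boxPenalty β) (Icc a b) a := by
  refine isMinOn_boxPenalty_of_nonneg ha ⟨le_rfl, hab⟩ fun l hl => ?_
  have : β ^ 2 ≤ l * a := by nlinarith [sq_abs β, abs_nonneg β, hl.1]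
  exact mul_nonneg (sub_nonneg.2 hl.1) (sub_nonneg.2 this)

lemma isMinOn_boxPenalty_abs (ha : 0 < a) (haβ : a ≤ |β|) (hβb : |β| ≤ b) :
    IsMinOn (boxPenalty β) (Icc a b) |β| := by
  refine isMinOn_boxPenalty_of_nonneg ha ⟨haβ, hβb⟩ fun l _ => ?_
  have : (l - |β|) * (l * |β| - β ^ 2) = |β| * (l - |β|) ^ 2 := by
    rw [← sq_abs β]
    ring
  rw [this]
  positivity

lemma isMinOn_boxPenalty_right (ha : 0 < a) (hab : a ≤ b) (hβ : b ≤ |β|) :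
    IsMinOn (boxPenalty β) (Icc a b) b := by
  refine isMinOn_boxPenalty_of_nonneg ha ⟨hab, le_rfl⟩ fun l hl => ?_
  have : l * b ≤ β ^ 2 := by nlinarith [sq_abs β, hl.2, ha.trans_le hl.1]
  exact mul_nonneg_of_nonpos_of_nonpos (sub_nonpos.2 hl.2) (sub_nonpos.2 this)

end Minimizer

theorem stmt_8 (a b β : ℝ) (ha : 0 < a) (hab : a ≤ b) :
    sInf {t : ℝ | ∃ l ∈ Set.Icc a b, t = (1/2) * (β ^ 2 / l + l)} =
      |β| + (1 / (2 * a)) * (max (a - |β|) 0) ^ 2 +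
        (1 / (2 * b)) * (max (|β| - b) 0) ^ 2 := by
  have hb : 0 < b := ha.trans_le hab
  have hset : {t : ℝ | ∃ l ∈ Set.Icc a b, t = (1/2) * (β ^ 2 / l + l)} =
      boxPenalty β '' Icc a b := by
    ext t
    simp only [mem_ofPred_eq, mem_image, boxPenalty, eq_comm]
  rw [hset]
  rcases le_total |β| a with hβa | haβ
  · rw [(isMinOn_boxPenalty_left ha hab hβa).csInf_image_eq ⟨le_rfl, hab⟩,
      boxPenalty_eq_abs_add β ha.ne', max_eq_left (by linarith), max_eq_right (by linarith)]
    ring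
  rcases le_total |β| b with hβb | hbβ
  · rw [(isMinOn_boxPenalty_abs ha haβ hβb).csInf_image_eq ⟨haβ, hβb⟩,
      boxPenalty_eq_abs_add β (ha.trans_le haβ).ne', max_eq_right (by linarith),
      max_eq_right (by linarith)]
    ring
  · rw [(isMinOn_boxPenalty_right ha hab hbβ).csInf_image_eq ⟨hab, le_rfl⟩,
      boxPenalty_eq_abs_add β hb.ne', max_eq_right (by linarith), max_eq_left (by linarith)]
    ring
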